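/- arXiv:1807.02195 — 6 statements merged into one kernel-verified Lean document; each statement's English description precedes it below -/
import Mathlib

section
/- Let f(x) = a_n x^n + ⋯ + a_1 x + a_0 be a nonconstant polynomial with integer coefficients satisfying 0 ≤ a_i ≤ b - 1 for some base b ≥ 2, and suppose f(b) is prime. Then the values f(m) for m ∈ ℤ are relatively prime, i.e., there is no prime q dividing f(m) for all m ∈ ℤ. -/
/-- A nonconstant polynomial with digit coefficients in base b (0 ≤ aᵢ ≤ b-1, b ≥ 2)
whose value at b is prime is proper: no prime divides all of its integer values. -/
theorem gcic_polynomial_is_proper (f : Polynomial ℤ) (b : ℤ) (hb : 2 ≤ b)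
    (hdeg : 1 ≤ f.natDegree)
    (hcoeff : ∀ i, 0 ≤ f.coeff i ∧ f.coeff i ≤ b - 1)
    (hprime : Prime (f.eval b)) :
    ¬ ∃ q : ℤ, Prime q ∧ ∀ m : ℤ, q ∣ f.eval m := by
  rintro ⟨q, hq, hdvd⟩
  set n := f.natDegree with hn
  have hf0 : f ≠ 0 := by
    intro h
    simp only [hn, h, Polynomial.natDegree_zero] at hdeg; omega
  have hlead : 1 ≤ f.coeff n := by
    have h1 := (hcoeff n).1
    have h2 : f.coeff n ≠ 0 := Polynomial.coeff_ne_zero_of_eq_degree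
      (Polynomial.degree_eq_natDegree hf0)
    omega
  have hb1 : (0:ℤ) ≤ b - 1 := by omega
  -- evaluate as sums over range (n+1)
  have heval : ∀ x : ℤ, f.eval x = ∑ i ∈ Finset.range (n+1), f.coeff i * x ^ i := by
    intro x
    rw [Polynomial.eval_eq_sum_range]
  -- f(b-1) > 0
  have hmem : n ∈ Finset.range (n+1) := Finset.self_mem_range_succ n
  have hpos : 0 < f.eval (b-1) := by
    rw [heval]
    have hterm : (0:ℤ) < f.coeff n * (b-1)^n := by
      have : (0:ℤ) < (b-1)^n := pow_pos (by omega) n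
      nlinarith
    have hnn : ∀ i ∈ Finset.range (n+1), (0:ℤ) ≤ f.coeff i * (b-1)^i :=
      fun i _ => mul_nonneg (hcoeff i).1 (pow_nonneg hb1 i)
    calc (0:ℤ) < f.coeff n * (b-1)^n := hterm
      _ ≤ _ := Finset.single_le_sum hnn hmem
  -- f(b-1) < f(b)
  have hlt : f.eval (b-1) < f.eval b := by
    have key : 0 < f.eval b - f.eval (b-1) := by
      rw [heval, heval, ← Finset.sum_sub_distrib]
      have hterm : (0:ℤ) < f.coeff n * b^n - f.coeff n * (b-1)^n := by
        have hlt' : (b-1)^n < b^n := by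
          apply pow_lt_pow_left₀ (by omega) hb1
          omega
        nlinarith
      have hnn : ∀ i ∈ Finset.range (n+1),
          (0:ℤ) ≤ f.coeff i * b^i - f.coeff i * (b-1)^i := by
        intro i _
        have hle : (b-1)^i ≤ b^i := pow_le_pow_left₀ hb1 (by omega) i
        have := (hcoeff i).1
        nlinarith
      calc (0:ℤ) < f.coeff n * b^n - f.coeff n * (b-1)^n := hterm
        _ ≤ _ := Finset.single_le_sum hnn hmem
    linarith
  -- q divides the prime f(b), so q is associated to f(b)
  have hassoc : Associated q (f.eval b) := hq.associated_of_dvd hprime (hdvd b)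
  have hdvd' : f.eval b ∣ f.eval (b-1) := hassoc.symm.dvd.trans (hdvd (b-1))
  have := Int.le_of_dvd hpos hdvd'
  linarith
end

section
/- Every positive polynomial f ∈ ℤ[x] (i.e., with positive leading coefficient) has a unique base-x representation f(x) = Σ_{i=0}^m b_i(x) x^i where each digit b_i(x) lies in {0, 1, …, a-1} ∪ {x-1, x-2, …, x-a} for some positive integer a, and b_m(x) ≠ 0. -/
/-!
A digit is determined by its constant coefficient `c`: it is `c` if `c ≥ 0` and `X + c` if
`c < 0`. Hence in `f = q + X * g` the digit `q` and the quotient `g` are forced by `f`, and the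
representation is unique whatever the digit bound; in particular the least admissible bound is
well defined. For existence, peel off the forced digit: the quotient is zero or again has
positive leading coefficient, and its degree is smaller, so the greedy expansion terminates.
-/

/-- A digit in base x: either a constant digit in {0, …, a-1} or a linear digit
x - j with 1 ≤ j ≤ a. -/
def IsDigit (a : ℕ) (q : Polynomial ℤ) : Prop :=
  (∃ j : ℕ, j < a ∧ q = Polynomial.C (j : ℤ)) ∨
  (∃ j : ℕ, 1 ≤ j ∧ j ≤ a ∧ q = Polynomial.X - Polynomial.C (j : ℤ))

/-- `f = ∑_{i=0}^m d i * x^i` is a base-x representation of `f` with digits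
bounded by `a` and nonzero top digit. -/
def IsBaseXRep (a : ℕ) (f : Polynomial ℤ) (m : ℕ) (d : ℕ → Polynomial ℤ) : Prop :=
  (∀ i, IsDigit a (d i)) ∧ d m ≠ 0 ∧ (∀ i, m < i → d i = 0) ∧
  f = ∑ i ∈ Finset.range (m + 1), d i * Polynomial.X ^ i

open Polynomial

noncomputable def digitOf (c : ℤ) : ℤ[X] := if 0 ≤ c then C c else X + C c

noncomputable def baseXQuot (f : ℤ[X]) : ℤ[X] := if 0 ≤ f.coeff 0 then divX f else divX f - 1

namespace IsDigit

variable {a b : ℕ} {q : ℤ[X]}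

theorem pos (h : IsDigit a q) : 0 < a := by
  rcases h with ⟨j, hj, -⟩ | ⟨j, hj, hja, -⟩ <;> omega

theorem mono (h : IsDigit a q) (hab : a ≤ b) : IsDigit b q := by
  rcases h with ⟨j, hj, rfl⟩ | ⟨j, hj, hja, rfl⟩
  · exact .inl ⟨j, by omega, rfl⟩
  · exact .inr ⟨j, hj, by omega, rfl⟩

theorem eq_digitOf (h : IsDigit a q) : q = digitOf (q.coeff 0) := by
  rcases h with ⟨j, -, rfl⟩ | ⟨j, hj, -, rfl⟩
  · simp [digitOf]
  · simp [digitOf, sub_eq_add_neg]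
    omega

end IsDigit

theorem isDigit_zero {a : ℕ} (ha : 0 < a) : IsDigit a 0 := .inl ⟨0, ha, by simp⟩

theorem isDigit_digitOf (c : ℤ) : IsDigit (c.natAbs + 1) (digitOf c) := by
  unfold digitOf
  split_ifs with hc
  · exact .inl ⟨c.natAbs, by omega, by rw [Int.natCast_natAbs, abs_of_nonneg hc]⟩
  · refine .inr ⟨c.natAbs, by omega, by omega, ?_⟩
    rw [Int.natCast_natAbs, abs_of_neg (not_le.1 hc), map_neg, sub_neg_eq_add]

theorem IsDigit.eq_and_eq_of_X_mul_add_eq {a b : ℕ} {q r S T : ℤ[X]} (hq : IsDigit a q)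
    (hr : IsDigit b r) (h : X * S + q = X * T + r) : q = r ∧ S = T := by
  have hqr : q = r := by
    have h0 := congrArg (coeff · 0) h
    simp only [coeff_add, coeff_X_mul_zero, zero_add] at h0
    rw [hq.eq_digitOf, hr.eq_digitOf, h0]
  subst hqr
  exact ⟨rfl, mul_left_cancel₀ X_ne_zero (add_right_cancel h)⟩

theorem sum_range_succ_mul_X_pow {R : Type*} [CommSemiring R] (u : ℕ → R[X]) (N : ℕ) :
    ∑ i ∈ Finset.range (N + 1), u i * X ^ i =
      X * ∑ i ∈ Finset.range N, u (i + 1) * X ^ i + u 0 := by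
  rw [Finset.sum_range_succ', Finset.mul_sum, pow_zero, mul_one]
  congr 1
  exact Finset.sum_congr rfl fun i _ => by ring

theorem eq_of_sum_range_digits_eq {a b : ℕ} {d e : ℕ → ℤ[X]} (hd : ∀ i, IsDigit a (d i))
    (he : ∀ i, IsDigit b (e i)) {N : ℕ}
    (h : ∑ i ∈ Finset.range N, d i * X ^ i = ∑ i ∈ Finset.range N, e i * X ^ i) :
    ∀ i < N, d i = e i := by
  induction N generalizing d e with
  | zero => simp
  | succ N ih =>
    rw [sum_range_succ_mul_X_pow, sum_range_succ_mul_X_pow] at h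
    obtain ⟨h0, htail⟩ := (hd 0).eq_and_eq_of_X_mul_add_eq (he 0) h
    rintro (_ | i) hi
    · exact h0
    · exact ih (fun i => hd (i + 1)) (fun i => he (i + 1)) htail i (by omega)

namespace IsBaseXRep

variable {a b : ℕ} {f : ℤ[X]} {m n : ℕ} {d e : ℕ → ℤ[X]}

theorem eq_sum_range (h : IsBaseXRep a f m d) {N : ℕ} (hN : m < N) :
    f = ∑ i ∈ Finset.range N, d i * X ^ i := by
  rw [h.2.2.2]
  refine Finset.sum_subset (Finset.range_subset_range.2 hN) fun i _ hi => ?_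
  rw [h.2.2.1 i (by simpa using hi), zero_mul]

theorem unique (hd : IsBaseXRep a f m d) (he : IsBaseXRep b f n e) : m = n ∧ d = e := by
  have hde : d = e := by
    funext i
    rcases lt_or_ge i (max m n + 1) with hi | hi
    · exact eq_of_sum_range_digits_eq hd.1 he.1
        ((hd.eq_sum_range (by omega)).symm.trans (he.eq_sum_range (by omega))) i hi
    · rw [hd.2.2.1 i (by omega), he.2.2.1 i (by omega)]
  subst hde
  refine ⟨le_antisymm ?_ ?_, rfl⟩
  · exact not_lt.1 fun hnm => hd.2.1 (he.2.2.1 m hnm)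
  · exact not_lt.1 fun hmn => he.2.1 (hd.2.2.1 n hmn)

theorem mono (h : IsBaseXRep a f m d) (hab : a ≤ b) : IsBaseXRep b f m d :=
  ⟨fun i => (h.1 i).mono hab, h.2⟩

theorem cons {q : ℤ[X]} (h : IsBaseXRep a f m d) (hq : IsDigit a q) :
    IsBaseXRep a (q + X * f) (m + 1) (fun | 0 => q | i + 1 => d i) := by
  refine ⟨fun | 0 => hq | i + 1 => h.1 i, h.2.1, ?_, ?_⟩
  · rintro (_ | i) hi
    · omega
    · exact h.2.2.1 i (by omega)
  rw [sum_range_succ_mul_X_pow, h.2.2.2, add_comm]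

end IsBaseXRep

theorem isBaseXRep_digit {a : ℕ} {q : ℤ[X]} (hq : IsDigit a q) (hq0 : q ≠ 0) :
    IsBaseXRep a q 0 (fun | 0 => q | _ + 1 => 0) :=
  ⟨fun | 0 => hq | _ + 1 => isDigit_zero hq.pos, hq0,
    by rintro (_ | i) hi <;> first | omega | rfl, by simp⟩

theorem digitOf_add_X_mul_baseXQuot (f : ℤ[X]) : digitOf (f.coeff 0) + X * baseXQuot f = f := by
  unfold digitOf baseXQuot
  split_ifs
  · rw [add_comm, X_mul_divX_add]
  · linear_combination X_mul_divX_add f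

theorem leadingCoeff_divX {R : Type*} [Semiring R] {p : R[X]} (hp : 0 < p.natDegree) :
    (divX p).leadingCoeff = p.leadingCoeff := by
  rw [leadingCoeff, natDegree_divX_eq_natDegree_tsub_one, coeff_divX, Nat.sub_add_cancel hp,
    leadingCoeff]

theorem leadingCoeff_sub_C_nonneg {p : ℤ[X]} (hp : 0 < p.leadingCoeff) {e : ℤ} (he : e ≤ 1) :
    0 ≤ (p - C e).leadingCoeff := by
  rcases Nat.eq_zero_or_pos p.natDegree with hdeg | hdeg
  · rw [eq_C_of_natDegree_eq_zero hdeg, ← C_sub, leadingCoeff_C]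
    rw [leadingCoeff, hdeg] at hp
    omega
  · rw [leadingCoeff, natDegree_sub_C, coeff_sub, coeff_C, if_neg hdeg.ne', sub_zero]
    exact hp.le

theorem baseXQuot_eq_zero_of_natDegree_eq_zero {f : ℤ[X]} (hf : 0 ≤ f.leadingCoeff)
    (hdeg : f.natDegree = 0) : baseXQuot f = 0 := by
  have hc : 0 ≤ f.coeff 0 := by rwa [leadingCoeff, hdeg] at hf
  rw [baseXQuot, if_pos hc, eq_C_of_natDegree_eq_zero hdeg, divX_C]

theorem leadingCoeff_baseXQuot_nonneg {f : ℤ[X]} (hf : 0 ≤ f.leadingCoeff) :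
    0 ≤ (baseXQuot f).leadingCoeff := by
  rcases Nat.eq_zero_or_pos f.natDegree with hdeg | hdeg
  · rw [baseXQuot_eq_zero_of_natDegree_eq_zero hf hdeg, leadingCoeff_zero]
  have hpos : 0 < (divX f).leadingCoeff := by
    rw [leadingCoeff_divX hdeg]
    exact hf.lt_of_ne' (leadingCoeff_ne_zero.2 (ne_zero_of_natDegree_gt hdeg))
  unfold baseXQuot
  split_ifs
  · exact hpos.le
  · simpa using leadingCoeff_sub_C_nonneg hpos le_rfl

theorem natDegree_baseXQuot_lt {f : ℤ[X]} (hf : 0 ≤ f.leadingCoeff) (hg : baseXQuot f ≠ 0) :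
    (baseXQuot f).natDegree < f.natDegree := by
  have hdeg : f.natDegree ≠ 0 := fun h => hg (baseXQuot_eq_zero_of_natDegree_eq_zero hf h)
  have hle : (baseXQuot f).natDegree ≤ (divX f).natDegree := by
    unfold baseXQuot
    split_ifs
    · exact le_rfl
    · rw [← C_1, natDegree_sub_C]
  rw [natDegree_divX_eq_natDegree_tsub_one] at hle
  omega

theorem exists_isBaseXRep {f : ℤ[X]} (hf : 0 < f.leadingCoeff) :
    ∃ a, 0 < a ∧ ∃ m d, IsBaseXRep a f m d := by
  induction hn : f.natDegree using Nat.strong_induction_on generalizing f with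
  | _ n ih =>
  have hdigit := isDigit_digitOf (f.coeff 0)
  have hsplit := digitOf_add_X_mul_baseXQuot f
  by_cases hg : baseXQuot f = 0
  · rw [hg, mul_zero, add_zero] at hsplit
    have hf0 : digitOf (f.coeff 0) ≠ 0 := by rw [hsplit]; exact leadingCoeff_ne_zero.1 hf.ne'
    exact ⟨_, hdigit.pos, 0, _, hsplit ▸ isBaseXRep_digit hdigit hf0⟩
  · have hgpos : 0 < (baseXQuot f).leadingCoeff :=
      (leadingCoeff_baseXQuot_nonneg hf.le).lt_of_ne' (leadingCoeff_ne_zero.2 hg)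
    obtain ⟨a, ha, m, d, hrep⟩ := ih _ (hn ▸ natDegree_baseXQuot_lt hf.le hg) hgpos rfl
    exact ⟨max a _, lt_max_of_lt_left ha, m + 1, _,
      hsplit ▸ (hrep.mono (le_max_left _ _)).cons (hdigit.mono (le_max_right _ _))⟩

/-- Existence and uniqueness of the base-x representation of a positive polynomial,
for the least admissible digit bound a (the minimum base). -/
theorem baseX_representation_exists_unique (f : Polynomial ℤ) (hf : 0 < f.leadingCoeff) :
    ∃ a : ℕ, 0 < a ∧ (∃ m d, IsBaseXRep a f m d) ∧
      (∀ a' : ℕ, 0 < a' → (∃ m d, IsBaseXRep a' f m d) → a ≤ a') ∧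
      (∀ m₁ m₂ : ℕ, ∀ d₁ d₂ : ℕ → Polynomial ℤ,
        IsBaseXRep a f m₁ d₁ → IsBaseXRep a f m₂ d₂ → m₁ = m₂ ∧ d₁ = d₂) := by
  classical
  have hex := exists_isBaseXRep hf
  exact ⟨Nat.find hex, (Nat.find_spec hex).1, (Nat.find_spec hex).2,
    fun a' ha' h' => Nat.find_min' hex ⟨ha', h'⟩, fun _ _ _ _ h₁ h₂ => h₁.unique h₂⟩
end

section
/- If f ∈ ℤ[x] has base-x representation f(x) = Σ b_i(x) x^i with digits b_i(x) ∈ {0,…,a-1} ∪ {x-1,…,x-a}, then for every integer b ≥ a, the base-b expansion of f(b) has digits b_i(b), i.e., f(b) = Σ b_i(b)·b^i with 0 ≤ b_i(b) ≤ b-1. -/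
open Polynomial

theorem IsDigit.eval_mem_Icc {a : ℕ} {q : ℤ[X]} (hq : IsDigit a q) {b : ℤ} (hb : (a : ℤ) ≤ b) :
    q.eval b ∈ Set.Icc 0 (b - 1) := by
  rcases hq with ⟨j, hja, rfl⟩ | ⟨j, hj, hja, rfl⟩
  · simp only [eval_C, Set.mem_Icc]
    omega
  · simp only [eval_sub, eval_X, eval_C, Set.mem_Icc]
    omega

theorem IsBaseXRep.eval_eq_sum {a m : ℕ} {f : ℤ[X]} {d : ℕ → ℤ[X]} (hrep : IsBaseXRep a f m d)
    (b : ℤ) : f.eval b = ∑ i ∈ Finset.range (m + 1), (d i).eval b * b ^ i := by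
  simp [hrep.2.2.2, eval_finsetSum]

theorem baseX_eval_gives_base_b_expansion_general (f : Polynomial ℤ)
    (a m : ℕ) (d : ℕ → Polynomial ℤ) (hrep : IsBaseXRep a f m d)
    (b : ℤ) (hb : (a : ℤ) ≤ b) :
    f.eval b = ∑ i ∈ Finset.range (m + 1), (d i).eval b * b ^ i ∧
    ∀ i, 0 ≤ (d i).eval b ∧ (d i).eval b ≤ b - 1 :=
  ⟨hrep.eval_eq_sum b, fun i => (hrep.1 i).eval_mem_Icc hb⟩

/-- Substituting any integer b ≥ a into a base-x representation gives the
base-b expansion of f(b): the digits evaluate to integers in {0, …, b-1}. -/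
theorem baseX_eval_gives_base_b_expansion (f : Polynomial ℤ) (hf : 0 < f.leadingCoeff)
    (a m : ℕ) (d : ℕ → Polynomial ℤ) (hrep : IsBaseXRep a f m d)
    (b : ℤ) (hb : (a : ℤ) ≤ b) :
    f.eval b = ∑ i ∈ Finset.range (m + 1), (d i).eval b * b ^ i ∧
    ∀ i, 0 ≤ (d i).eval b ∧ (d i).eval b ≤ b - 1 :=
  baseX_eval_gives_base_b_expansion_general f a m d hrep b hb
end

section
/- The minimum base mb(f) of a positive polynomial f satisfies H(f) ≤ mb(f) ≤ H(f) + 1, where H(f) is the maximum absolute value of the coefficients of f. -/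
/-- The minimum base of f: least positive a admitting a base-x representation. -/
noncomputable def mb (f : Polynomial ℤ) : ℕ :=
  sInf {a : ℕ | 0 < a ∧ ∃ m d, IsBaseXRep a f m d}

/-- The height of f: maximum absolute value of its coefficients. -/
def H (f : Polynomial ℤ) : ℕ := f.support.sup fun i => (f.coeff i).natAbs

/-!
A base-`x` digit is `c + e x` with `-a ≤ c < a` and `e ∈ {0, 1}`, so every coefficient of a
base-`x` expansion lies in `[-a, a]`; hence `H f ≤ mb f`. Conversely, writing the coefficients
`c₀, c₁, …` of `f` from the bottom up, a value `v ≥ 0` becomes the digit `v` and a value `v < 0`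
becomes the digit `x + v = x - |v|` at the cost of borrowing `1` from the next coefficient.
The values stay in `[-H f - 1, H f]`, giving digits for the base `H f + 1`, and the positive
leading coefficient absorbs the last borrow.
-/

open Polynomial

lemma natAbs_coeff_le_H (f : ℤ[X]) (n : ℕ) : (f.coeff n).natAbs ≤ H f := by
  by_cases h : n ∈ f.support
  · exact Finset.le_sup (f := fun i => (f.coeff i).natAbs) h
  · simp [notMem_support_iff.mp h]

lemma H_le_of_forall_natAbs_coeff_le {f : ℤ[X]} {a : ℕ} (h : ∀ n, (f.coeff n).natAbs ≤ a) :
    H f ≤ a :=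
  Finset.sup_le fun n _ => h n

lemma coeff_sum_C_mul_X_pow (s : Finset ℕ) (g : ℕ → ℤ) (n : ℕ) :
    (∑ i ∈ s, C (g i) * X ^ i).coeff n = if n ∈ s then g n else 0 := by
  simp [finsetSum_coeff]

lemma IsDigit.exists_eq_C_add_C_mul_X {a : ℕ} {q : ℤ[X]} (h : IsDigit a q) :
    ∃ c e : ℤ, q = C c + C e * X ∧ -(a : ℤ) ≤ c ∧ c < a ∧ 0 ≤ e ∧ e ≤ 1 := by
  rcases h with ⟨j, hj, rfl⟩ | ⟨j, hj₁, hj, rfl⟩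
  · exact ⟨j, 0, by simp, by omega, by omega, le_rfl, zero_le_one⟩
  · exact ⟨-j, 1, by simp; ring, by omega, by omega, zero_le_one, le_rfl⟩

lemma natAbs_coeff_sum_digit_mul_X_pow_le {a : ℕ} {d : ℕ → ℤ[X]} (hd : ∀ i, IsDigit a (d i))
    (s : Finset ℕ) (n : ℕ) : ((∑ i ∈ s, d i * X ^ i).coeff n).natAbs ≤ a := by
  choose c e hde hc_lo hc_hi he_lo he_hi using fun i => (hd i).exists_eq_C_add_C_mul_X
  have hsplit :
      ∑ i ∈ s, d i * X ^ i = (∑ i ∈ s, C (c i) * X ^ i) + X * ∑ i ∈ s, C (e i) * X ^ i := by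
    simp only [hde, Finset.mul_sum, ← Finset.sum_add_distrib]
    exact Finset.sum_congr rfl fun i _ => by ring
  have hlow : -(a : ℤ) ≤ (∑ i ∈ s, C (c i) * X ^ i).coeff n ∧
      (∑ i ∈ s, C (c i) * X ^ i).coeff n < (a : ℤ) := by
    rw [coeff_sum_C_mul_X_pow]
    split_ifs
    · exact ⟨hc_lo n, hc_hi n⟩
    · have := (hc_lo 0).trans_lt (hc_hi 0)
      omega
  have hcarry : 0 ≤ (X * ∑ i ∈ s, C (e i) * X ^ i).coeff n ∧
      (X * ∑ i ∈ s, C (e i) * X ^ i).coeff n ≤ 1 := by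
    rcases n with _ | n
    · simp
    · rw [coeff_X_mul, coeff_sum_C_mul_X_pow]
      split_ifs
      · exact ⟨he_lo n, he_hi n⟩
      · omega
  rw [hsplit, coeff_add]
  omega

lemma H_le_of_isBaseXRep {a m : ℕ} {f : ℤ[X]} {d : ℕ → ℤ[X]} (h : IsBaseXRep a f m d) :
    H f ≤ a := by
  obtain ⟨hd, -, -, rfl⟩ := h
  exact H_le_of_forall_natAbs_coeff_le (natAbs_coeff_sum_digit_mul_X_pow_le hd _)

section Greedy

lemma exists_isBaseXRep_of_eq_sum {a N : ℕ} {f : ℤ[X]} {d : ℕ → ℤ[X]} (hf : f ≠ 0)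
    (hd : ∀ i, IsDigit a (d i)) (hvanish : ∀ i, N < i → d i = 0)
    (hsum : f = ∑ i ∈ Finset.range (N + 1), d i * X ^ i) : ∃ m, IsBaseXRep a f m d := by
  obtain ⟨i₀, hi₀N, hi₀⟩ : ∃ i ≤ N, d i ≠ 0 := by
    by_contra! h
    exact hf (hsum.trans (Finset.sum_eq_zero fun i hi => by
      rw [h i (Nat.lt_succ_iff.mp (Finset.mem_range.mp hi)), zero_mul]))
  set m := Nat.findGreatest (fun i => d i ≠ 0) N
  have hmN : m ≤ N := Nat.findGreatest_le N
  have habove : ∀ i, m < i → d i = 0 := fun i hi => by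
    by_cases hiN : i ≤ N
    · exact not_not.mp (Nat.findGreatest_is_greatest hi hiN)
    · exact hvanish i (not_le.mp hiN)
  refine ⟨m, hd, Nat.findGreatest_spec (P := fun i => d i ≠ 0) hi₀N hi₀, habove, hsum.trans ?_⟩
  refine (Finset.sum_subset (Finset.range_subset_range.mpr (by omega)) fun i _ hi => ?_).symm
  rw [habove i (by simpa using hi), zero_mul]

variable (f : ℤ[X])

/-- The value of the `n`-th coefficient of `f` after the borrows from the places below it. -/
noncomputable def greedyValue : ℕ → ℤ
  | 0 => f.coeff 0
  | n + 1 => f.coeff (n + 1) - if greedyValue n < 0 then 1 else 0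

noncomputable def greedyDigit (n : ℕ) : ℤ[X] :=
  if greedyValue f n < 0 then X - C (-greedyValue f n) else C (greedyValue f n)

lemma coeff_sub_one_le_greedyValue (n : ℕ) :
    f.coeff n - 1 ≤ greedyValue f n ∧ greedyValue f n ≤ f.coeff n := by
  cases n with
  | zero => simp [greedyValue]
  | succ n => simp only [greedyValue]; split_ifs <;> omega

lemma isDigit_greedyDigit (n : ℕ) : IsDigit (H f + 1) (greedyDigit f n) := by
  have hv := coeff_sub_one_le_greedyValue f n
  have hc := natAbs_coeff_le_H f n
  unfold greedyDigit
  split_ifs with hneg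
  · refine Or.inr ⟨(-greedyValue f n).toNat, by omega, by omega, ?_⟩
    rw [Int.toNat_of_nonneg (by omega)]
  · refine Or.inl ⟨(greedyValue f n).toNat, by omega, ?_⟩
    rw [Int.toNat_of_nonneg (by omega)]

lemma sum_greedyDigit_mul_X_pow (n : ℕ) :
    ∑ i ∈ Finset.range (n + 1), greedyDigit f i * X ^ i =
      (∑ i ∈ Finset.range (n + 1), C (f.coeff i) * X ^ i) +
        if greedyValue f n < 0 then X ^ (n + 1) else 0 := by
  induction n with
  | zero =>
    simp only [zero_add, Finset.sum_range_one, pow_zero, mul_one, greedyDigit, greedyValue]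
    split_ifs with h <;> simp [h, add_comm]
  | succ n ih =>
    rw [Finset.sum_range_succ, ih, Finset.sum_range_succ _ (n + 1)]
    simp only [greedyDigit, greedyValue]
    split_ifs <;> simp only [map_sub, map_neg, map_one, sub_zero] <;> ring

variable {f}

lemma greedyValue_nonneg (hf : 0 < f.leadingCoeff) {n : ℕ} (hn : f.natDegree ≤ n) :
    0 ≤ greedyValue f n := by
  induction n, hn using Nat.le_induction with
  | base =>
    have := (coeff_sub_one_le_greedyValue f f.natDegree).1
    rw [coeff_natDegree] at this
    omega
  | succ n _ ih =>
    rw [greedyValue, if_neg ih.not_gt, coeff_eq_zero_of_natDegree_lt (by omega)]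
    simp

lemma greedyDigit_eq_zero (hf : 0 < f.leadingCoeff) {n : ℕ} (hn : f.natDegree < n) :
    greedyDigit f n = 0 := by
  obtain ⟨n, rfl⟩ := Nat.exists_eq_add_of_lt hn
  rw [greedyDigit, greedyValue, if_neg (greedyValue_nonneg hf (by omega)).not_gt,
    coeff_eq_zero_of_natDegree_lt (by omega)]
  simp

lemma exists_isBaseXRep_H_add_one (hf : 0 < f.leadingCoeff) :
    ∃ m d, IsBaseXRep (H f + 1) f m d := by
  have hsum := sum_greedyDigit_mul_X_pow f f.natDegree
  rw [if_neg (greedyValue_nonneg hf le_rfl).not_gt, add_zero, ← as_sum_range_C_mul_X_pow] at hsum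
  obtain ⟨m, hm⟩ := exists_isBaseXRep_of_eq_sum (by rintro rfl; simp at hf)
    (isDigit_greedyDigit f) (fun _ => greedyDigit_eq_zero hf) hsum.symm
  exact ⟨m, _, hm⟩

end Greedy

/-- H(f) ≤ mb(f) ≤ H(f) + 1 for every positive polynomial f. -/
theorem height_le_minBase_le_height_succ (f : Polynomial ℤ) (hf : 0 < f.leadingCoeff) :
    H f ≤ mb f ∧ mb f ≤ H f + 1 := by
  have hmem : H f + 1 ∈ {a : ℕ | 0 < a ∧ ∃ m d, IsBaseXRep a f m d} :=
    ⟨Nat.succ_pos _, exists_isBaseXRep_H_add_one hf⟩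
  obtain ⟨-, m, d, hrep⟩ := Nat.sInf_mem ⟨_, hmem⟩
  exact ⟨H_le_of_isBaseXRep hrep, Nat.sInf_le hmem⟩
end

section
/- Irreducibility from large prime values: let f ∈ ℤ[x] be nonconstant with positive leading coefficient, and suppose every divisor g of f in ℤ[x] with positive leading coefficient has all coefficients bounded in absolute value by a. If f(b) is prime for some integer b ≥ a + 2, then f is irreducible in ℤ[x]. -/
open Polynomial Finset

private lemma aux_geom (a : ℕ) (b : ℤ) (hb : (a : ℤ) + 2 ≤ b) :
    ∀ n, 1 ≤ n → (b : ℤ) - a ≤ b ^ n - a * ∑ i ∈ Finset.range n, b ^ i := by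
  intro n hn
  induction n with
  | zero => omega
  | succ m ih =>
    rcases Nat.eq_or_lt_of_le hn with h | h
    · simp [← h]
    · have hm : 1 ≤ m := by omega
      have hIH := ih hm
      have hb2 : (2 : ℤ) ≤ b := by push_cast at hb ⊢; omega
      have key : b ^ (m + 1) - a * ∑ i ∈ Finset.range (m + 1), b ^ i
          = b * (b ^ m - a * ∑ i ∈ Finset.range m, b ^ i) - a := by
        rw [Finset.sum_range_succ' (fun i => b ^ i)]
        simp only [pow_succ, pow_zero]
        rw [← Finset.sum_mul]
        ring
      rw [key]
      nlinarith [pow_pos (by omega : (0:ℤ) < b) m]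

private lemma eval_ge_two (g : Polynomial ℤ) (hg : 0 < g.leadingCoeff)
    (hn : 1 ≤ g.natDegree) (a : ℕ) (hc : ∀ i, (g.coeff i).natAbs ≤ a)
    (b : ℤ) (hb : (a : ℤ) + 2 ≤ b) : 2 ≤ g.eval b := by
  set n := g.natDegree with hndef
  have hb0 : (0 : ℤ) < b := by omega
  have heval : g.eval b = ∑ i ∈ Finset.range (n + 1), g.coeff i * b ^ i := by
    rw [eval_eq_sum_range]
  rw [heval, Finset.sum_range_succ]
  have hlead : 1 ≤ g.coeff n := hg
  have h1 : b ^ n ≤ g.coeff n * b ^ n := by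
    nlinarith [pow_pos hb0 n]
  have h2 : -(a : ℤ) * ∑ i ∈ Finset.range n, b ^ i ≤
      ∑ i ∈ Finset.range n, g.coeff i * b ^ i := by
    rw [Finset.mul_sum]
    apply Finset.sum_le_sum
    intro i _
    have := hc i
    have habs : -(a : ℤ) ≤ g.coeff i := by omega
    nlinarith [pow_pos hb0 i, habs]
  have h3 := aux_geom a b hb n hn
  linarith

private lemma unit_of_dvd_unit_eval (f : Polynomial ℤ)
    (hdeg : 1 ≤ f.natDegree) (a : ℕ)
    (hbound : ∀ g : Polynomial ℤ, g ∣ f → 0 < g.leadingCoeff →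
      ∀ i, (g.coeff i).natAbs ≤ a)
    (b : ℤ) (hb : (a : ℤ) + 2 ≤ b)
    (g : Polynomial ℤ) (hdvd : g ∣ f) (hu : IsUnit (g.eval b)) :
    IsUnit g := by
  have hf0 : f ≠ 0 := fun h => by simp [h] at hdeg
  have hg0 : g ≠ 0 := by rintro rfl; exact hf0 (zero_dvd_iff.mp hdvd)
  have hlc : g.leadingCoeff ≠ 0 := leadingCoeff_ne_zero.mpr hg0
  -- pick g' = ±g with positive leading coeff
  obtain ⟨g', hgg', hlc', hdvd'⟩ :
      ∃ g' : Polynomial ℤ, (g' = g ∨ g' = -g) ∧ 0 < g'.leadingCoeff ∧ g' ∣ f := by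
    rcases lt_or_gt_of_ne hlc with h | h
    · exact ⟨-g, Or.inr rfl, by simpa using h, (neg_dvd).mpr hdvd⟩
    · exact ⟨g, Or.inl rfl, h, hdvd⟩
  have hu' : IsUnit (g'.eval b) := by
    rcases hgg' with rfl | rfl
    · exact hu
    · simpa using hu.neg
  have hc := hbound g' hdvd' hlc'
  have hdeg0 : g'.natDegree = 0 := by
    by_contra h
    have := eval_ge_two g' hlc' (by omega) a hc b hb
    rcases Int.isUnit_iff.mp hu' with h1 | h1 <;> omega
  have : IsUnit g' := by
    rw [Polynomial.eq_C_of_natDegree_eq_zero hdeg0]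
    apply Polynomial.isUnit_C.mpr
    have : g'.eval b = g'.coeff 0 := by
      conv_lhs => rw [Polynomial.eq_C_of_natDegree_eq_zero hdeg0]
      simp
    rwa [this] at hu'
  rcases hgg' with rfl | rfl
  · exact this
  · simpa using this.neg

/-- Irreducibility from large prime values: if every positive divisor of f has
all coefficients bounded in absolute value by a, and f(b) is prime for some
integer b ≥ a + 2, then f is irreducible. -/
theorem irreducible_of_prime_value_past_bound (f : Polynomial ℤ)
    (hdeg : 1 ≤ f.natDegree) (hpos : 0 < f.leadingCoeff) (a : ℕ)
    (hbound : ∀ g : Polynomial ℤ, g ∣ f → 0 < g.leadingCoeff →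
      ∀ i, (g.coeff i).natAbs ≤ a)
    (b : ℤ) (hb : (a : ℤ) + 2 ≤ b) (hprime : Prime (f.eval b)) :
    Irreducible f := by
  constructor
  · exact Polynomial.not_isUnit_of_natDegree_pos f (by omega)
  · intro g h hgh
    have hev : f.eval b = g.eval b * h.eval b := by rw [hgh, eval_mul]
    rcases hprime.irreducible.isUnit_or_isUnit hev with hu | hu
    · exact Or.inl (unit_of_dvd_unit_eval f hdeg a hbound b hb g ⟨h, hgh⟩ hu)
    · exact Or.inr (unit_of_dvd_unit_eval f hdeg a hbound b hb h ⟨g, by rw [hgh, mul_comm]⟩ hu)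
end

section
/- Mignotte-type height bound: if g divides f in ℤ[x] with f ≠ 0, then the maximum absolute value of the coefficients of g is at most 2^{deg f} · ‖f‖₂, where ‖f‖₂ is the square root of the sum of squares of the coefficients of f. -/
/-!
Pass to `ℂ[X]` and compare both ℓ₂-norms with the Mahler measure `M`. Every coefficient of `g`
is at most `C(deg g, i) · M(g)` (Vieta), so `‖g‖₂ ≤ ‖g‖₁ ≤ 2^{deg g} · M(g)`. Writing `f = g h`,
`M` is multiplicative and `M(h) ≥ 1` because `h` has a nonzero integer leading coefficient, so
`M(g) ≤ M(f)`; finally Landau's inequality gives `M(f) ≤ ‖f‖₂`.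
-/

/-- The ℓ₂-norm of an integer polynomial. -/
noncomputable def l2norm (f : Polynomial ℤ) : ℝ :=
  Real.sqrt (∑ i ∈ f.support, ((f.coeff i : ℝ)) ^ 2)

namespace Polynomial

theorem sqrt_sum_sq_norm_coeff_le_sum_norm_coeff {R : Type*} [SeminormedRing R] (p : R[X]) :
    √(∑ i ∈ p.support, ‖p.coeff i‖ ^ 2) ≤ ∑ i ∈ p.support, ‖p.coeff i‖ :=
  (Real.sqrt_le_left (Finset.sum_nonneg fun _ _ ↦ norm_nonneg _)).mpr
    (Finset.sum_sq_le_sq_sum_of_nonneg fun _ _ ↦ norm_nonneg _)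

theorem sum_norm_coeff_le_two_pow_mul_mahlerMeasure (p : ℂ[X]) :
    ∑ i ∈ p.support, ‖p.coeff i‖ ≤ 2 ^ p.natDegree * p.mahlerMeasure := by
  calc ∑ i ∈ p.support, ‖p.coeff i‖
      ≤ ∑ i ∈ Finset.range (p.natDegree + 1), ‖p.coeff i‖ :=
        Finset.sum_le_sum_of_subset_of_nonneg supp_subset_range_natDegree_succ
          fun _ _ _ ↦ norm_nonneg _
    _ ≤ ∑ i ∈ Finset.range (p.natDegree + 1), (p.natDegree.choose i : ℝ) * p.mahlerMeasure :=
        Finset.sum_le_sum fun i _ ↦ p.norm_coeff_le_choose_mul_mahlerMeasure i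
    _ = 2 ^ p.natDegree * p.mahlerMeasure := by
        rw [← Finset.sum_mul]
        exact_mod_cast congrArg (fun n : ℕ ↦ (n : ℝ) * p.mahlerMeasure)
          (Nat.sum_range_choose p.natDegree)

theorem sqrt_sum_sq_norm_coeff_le_two_pow_mul_mahlerMeasure (p : ℂ[X]) :
    √(∑ i ∈ p.support, ‖p.coeff i‖ ^ 2) ≤ 2 ^ p.natDegree * p.mahlerMeasure :=
  (sqrt_sum_sq_norm_coeff_le_sum_norm_coeff p).trans
    (sum_norm_coeff_le_two_pow_mul_mahlerMeasure p)

theorem mahlerMeasure_map_le_of_dvd {g f : ℤ[X]} (hf : f ≠ 0) (hdvd : g ∣ f) :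
    (g.map (Int.castRingHom ℂ)).mahlerMeasure ≤ (f.map (Int.castRingHom ℂ)).mahlerMeasure := by
  obtain ⟨h, rfl⟩ := hdvd
  rw [Polynomial.map_mul, mahlerMeasure_mul]
  exact le_mul_of_one_le_right (mahlerMeasure_nonneg _)
    (one_le_mahlerMeasure_of_ne_zero (right_ne_zero_of_mul hf))

end Polynomial

open Polynomial

theorem l2norm_eq_sqrt_sum_sq_norm_coeff_map (p : ℤ[X]) :
    l2norm p = √(∑ i ∈ (p.map (Int.castRingHom ℂ)).support,
      ‖(p.map (Int.castRingHom ℂ)).coeff i‖ ^ 2) := by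
  rw [l2norm, support_map_of_injective p (Int.castRingHom ℂ).injective_int]
  simp

theorem l2norm_nonneg (p : ℤ[X]) : 0 ≤ l2norm p :=
  Real.sqrt_nonneg _

theorem abs_coeff_le_l2norm (p : ℤ[X]) (i : ℕ) : |(p.coeff i : ℝ)| ≤ l2norm p := by
  by_cases hi : i ∈ p.support
  · rw [← Real.sqrt_sq_eq_abs]
    exact Real.sqrt_le_sqrt
      (Finset.single_le_sum (f := fun j ↦ (p.coeff j : ℝ) ^ 2) (fun _ _ ↦ sq_nonneg _) hi)
  · simpa [notMem_support_iff.mp hi] using l2norm_nonneg p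

theorem l2norm_le_two_pow_natDegree_mul_l2norm_of_dvd {g f : ℤ[X]} (hf : f ≠ 0) (hdvd : g ∣ f) :
    l2norm g ≤ 2 ^ g.natDegree * l2norm f := by
  rw [l2norm_eq_sqrt_sum_sq_norm_coeff_map, l2norm_eq_sqrt_sum_sq_norm_coeff_map]
  calc _ ≤ 2 ^ g.natDegree * (g.map (Int.castRingHom ℂ)).mahlerMeasure := by
        simpa [natDegree_map_eq_of_injective (Int.castRingHom ℂ).injective_int] using
          sqrt_sum_sq_norm_coeff_le_two_pow_mul_mahlerMeasure (g.map (Int.castRingHom ℂ))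
    _ ≤ 2 ^ g.natDegree * (f.map (Int.castRingHom ℂ)).mahlerMeasure := by
        gcongr
        exact mahlerMeasure_map_le_of_dvd hf hdvd
    _ ≤ _ := by
        gcongr
        exact mahlerMeasure_le_sqrt_sum_sq_norm_coeff _

/-- Mignotte-type height bound: if g divides f ≠ 0 in ℤ[x], then
H(g) ≤ ‖g‖₂ ≤ 2^{deg g}·‖f‖₂ ≤ 2^{deg f}·‖f‖₂. -/
theorem mignotte_height_bound (f g : Polynomial ℤ) (hf : f ≠ 0) (hdvd : g ∣ f) :
    (∀ i, |(g.coeff i : ℝ)| ≤ l2norm g) ∧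
    l2norm g ≤ 2 ^ g.natDegree * l2norm f ∧
    (2 : ℝ) ^ g.natDegree * l2norm f ≤ 2 ^ f.natDegree * l2norm f :=
  ⟨abs_coeff_le_l2norm g, l2norm_le_two_pow_natDegree_mul_l2norm_of_dvd hf hdvd,
    mul_le_mul_of_nonneg_right (pow_le_pow_right₀ one_le_two (natDegree_le_of_dvd hdvd hf))
      (l2norm_nonneg f)⟩
end
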